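/- arXiv:2207.00898 — 7 statements merged into one kernel-verified Lean document; each statement's English description precedes it below -/
import Mathlib

section
/- For every demand vector d : Fin n → ℝ with 0 ≤ d i for all i, and every estate E with 0 ≤ E ≤ ∑ i, d i, there exists a level λ ≥ 0 such that ∑ i, min (d i) λ = E. (Existence of the constrained equal distribution used in the paper's fair allocation of rights.) -/
/-- Existence of the constrained equal distribution (CEA) level: for any
nonnegative demand vector `d` and any estate `E` with `0 ≤ E ≤ ∑ i, d i`,
there is a level `l ≥ 0` with `∑ i, min (d i) l = E`. -/
theorem cea_exists (n : ℕ) (d : Fin n → ℝ) (hd : ∀ i, 0 ≤ d i)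
    (E : ℝ) (hE0 : 0 ≤ E) (hED : E ≤ ∑ i, d i) :
    ∃ l : ℝ, 0 ≤ l ∧ (∑ i, min (d i) l) = E := by
  set D := ∑ i, d i with hD
  have hD0 : 0 ≤ D := Finset.sum_nonneg fun i _ => hd i
  have hcont : ContinuousOn (fun l => ∑ i, min (d i) l) (Set.Icc 0 D) := by
    apply Continuous.continuousOn
    exact continuous_finset_sum _ fun i _ => (continuous_const.min continuous_id)
  have h0 : (∑ i, min (d i) (0:ℝ)) = 0 := by
    apply Finset.sum_eq_zero
    intro i _
    simp [min_eq_right (hd i)]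
  have hDval : (∑ i, min (d i) D) = D := by
    apply Finset.sum_congr rfl
    intro i _
    exact min_eq_left (Finset.single_le_sum (fun j _ => hd j) (Finset.mem_univ i))
  have := intermediate_value_Icc hD0 hcont
  have hmem : E ∈ Set.Icc ((fun l => ∑ i, min (d i) l) 0) ((fun l => ∑ i, min (d i) l) D) := by
    simp only [h0, hDval]
    exact ⟨hE0, hED⟩
  obtain ⟨l, hl, hlE⟩ := this hmem
  exact ⟨l, hl.1, hlE⟩
end

section
/- The constrained equal distribution allocation is unique: if d : Fin n → ℝ satisfies 0 ≤ d i for all i, and λ ≥ 0 and μ ≥ 0 satisfy ∑ i, min (d i) λ = ∑ i, min (d i) μ, then min (d i) λ = min (d i) μ for every i. -/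
/-- Uniqueness of the constrained equal distribution (CEA) allocation: if two
levels `l, m ≥ 0` distribute the same total amount, then they give every agent
the same allocation. -/
theorem cea_unique (n : ℕ) (d : Fin n → ℝ) (hd : ∀ i, 0 ≤ d i)
    (l m : ℝ) (hl : 0 ≤ l) (hm : 0 ≤ m)
    (h : (∑ i, min (d i) l) = ∑ i, min (d i) m) :
    ∀ i, min (d i) l = min (d i) m := by
  rcases le_total l m with hlm | hlm
  · intro i
    have hle : ∀ j ∈ Finset.univ, min (d j) l ≤ min (d j) m :=
      fun j _ => min_le_min le_rfl hlm
    exact (Finset.sum_eq_sum_iff_of_le hle).mp h i (Finset.mem_univ i)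
  · intro i
    have hle : ∀ j ∈ Finset.univ, min (d j) m ≤ min (d j) l :=
      fun j _ => min_le_min le_rfl hlm
    exact ((Finset.sum_eq_sum_iff_of_le hle).mp h.symm i (Finset.mem_univ i)).symm
end

section
/- The constrained equal distribution is monotone in the estate: if d : Fin n → ℝ satisfies 0 ≤ d i for all i, and λ ≥ 0 and μ ≥ 0 satisfy ∑ i, min (d i) λ ≤ ∑ i, min (d i) μ, then min (d i) λ ≤ min (d i) μ for every i. -/
/-- Monotonicity of the constrained equal distribution (CEA) in the estate:
if the total distributed at level `l` is at most the total distributed at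
level `m`, then every agent's allocation at level `l` is at most its
allocation at level `m`. -/
theorem cea_monotone (n : ℕ) (d : Fin n → ℝ) (hd : ∀ i, 0 ≤ d i)
    (l m : ℝ) (hl : 0 ≤ l) (hm : 0 ≤ m)
    (h : (∑ i, min (d i) l) ≤ ∑ i, min (d i) m) :
    ∀ i, min (d i) l ≤ min (d i) m := by
  rcases le_or_gt l m with hlm | hml
  · intro i; exact min_le_min le_rfl hlm
  · have hle : ∀ i ∈ Finset.univ, min (d i) m ≤ min (d i) l :=
      fun i _ => min_le_min le_rfl hml.le
    have hsum : (∑ i, min (d i) m) = ∑ i, min (d i) l :=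
      le_antisymm (Finset.sum_le_sum hle) h
    intro i
    exact ((Finset.sum_eq_sum_iff_of_le hle).mp hsum i (Finset.mem_univ i)).ge
end

section
/- The contested garment distribution is monotone in the estate: let d : Fin n → ℝ with 0 ≤ d i for all i and D = ∑ i, d i. Suppose 0 ≤ E ≤ E' ≤ D, f is a CG allocation for (E, d) and f' is a CG allocation for (E', d). Then f i ≤ f' i for every i. In particular, in the cross-branch case E ≤ D/2 ≤ E', if λ ≥ 0 satisfies ∑ i, min (d i / 2) λ = E and μ ≥ 0 satisfies ∑ i, min (d i / 2) μ = D − E', then min (d i / 2) λ ≤ d i − min (d i / 2) μ for every i. -/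
/-- `IsCG n d E f` says that `f` is a contested garment (CG) allocation of the
estate `E` for the demand vector `d`. -/
def IsCG (n : ℕ) (d : Fin n → ℝ) (E : ℝ) (f : Fin n → ℝ) : Prop :=
  (E ≤ (∑ i, d i) / 2 ∧
    ∃ l : ℝ, 0 ≤ l ∧ (∑ i, min (d i / 2) l) = E ∧ ∀ i, f i = min (d i / 2) l) ∨
  ((∑ i, d i) / 2 ≤ E ∧
    ∃ μ : ℝ, 0 ≤ μ ∧ (∑ i, min (d i / 2) μ) = (∑ i, d i) - E ∧
      ∀ i, f i = d i - min (d i / 2) μ)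

private lemma cg_pointwise (n : ℕ) (d : Fin n → ℝ) (l l' : ℝ)
    (h : (∑ i, min (d i / 2) l) ≤ ∑ i, min (d i / 2) l') :
    ∀ i, min (d i / 2) l ≤ min (d i / 2) l' := by
  rcases le_total l l' with hll | hll
  · exact fun i => min_le_min le_rfl hll
  · have hpt : ∀ i ∈ Finset.univ, min (d i / 2) l' ≤ min (d i / 2) l :=
      fun i _ => min_le_min le_rfl hll
    have hsum : (∑ i, min (d i / 2) l') = ∑ i, min (d i / 2) l :=
      le_antisymm (Finset.sum_le_sum hpt) h
    intro i
    have := (Finset.sum_eq_sum_iff_of_le hpt).mp hsum i (Finset.mem_univ i)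
    exact this.ge

/-- Monotonicity of the contested garment distribution in the estate, together
with the explicit cross-branch case `E ≤ D/2 ≤ E'`. -/
theorem cg_monotone (n : ℕ) (d : Fin n → ℝ) (hd : ∀ i, 0 ≤ d i)
    (E E' : ℝ) (hE0 : 0 ≤ E) (hEE' : E ≤ E') (hE'D : E' ≤ ∑ i, d i)
    (f f' : Fin n → ℝ) (hf : IsCG n d E f) (hf' : IsCG n d E' f') :
    (∀ i, f i ≤ f' i) ∧
    (∀ l μ : ℝ, 0 ≤ l → 0 ≤ μ → E ≤ (∑ i, d i) / 2 → (∑ i, d i) / 2 ≤ E' →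
      (∑ i, min (d i / 2) l) = E → (∑ i, min (d i / 2) μ) = (∑ i, d i) - E' →
      ∀ i, min (d i / 2) l ≤ d i - min (d i / 2) μ) := by
  have cross : ∀ (l μ : ℝ) (i : Fin n),
      min (d i / 2) l ≤ d i - min (d i / 2) μ := by
    intro l μ i
    have h1 : min (d i / 2) l ≤ d i / 2 := min_le_left _ _
    have h2 : min (d i / 2) μ ≤ d i / 2 := min_le_left _ _
    linarith
  constructor
  · rcases hf with ⟨hED, l, hl0, hlsum, hlf⟩ | ⟨hDE, μ, hμ0, hμsum, hμf⟩
    · rcases hf' with ⟨hED', l', hl0', hlsum', hlf'⟩ | ⟨hDE', μ', hμ0', hμsum', hμf'⟩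
      · intro i
        rw [hlf, hlf']
        exact cg_pointwise n d l l' (by rw [hlsum, hlsum']; exact hEE') i
      · intro i
        rw [hlf, hμf']
        exact cross l μ' i
    · rcases hf' with ⟨hED', l', hl0', hlsum', hlf'⟩ | ⟨hDE', μ', hμ0', hμsum', hμf'⟩
      · -- E = E' = D/2 here
        have hE : E = (∑ i, d i) / 2 := le_antisymm (le_trans hEE' hED') hDE
        have hE' : E' = (∑ i, d i) / 2 := le_antisymm hED' (le_trans hDE hEE')
        have hpt : ∀ i ∈ Finset.univ, min (d i / 2) μ ≤ d i / 2 :=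
          fun i _ => min_le_left _ _
        have hsμ : (∑ i, min (d i / 2) μ) = ∑ i, d i / 2 := by
          rw [hμsum, hE, ← Finset.sum_div]; ring
        have hμeq := (Finset.sum_eq_sum_iff_of_le hpt).mp hsμ
        have hpt' : ∀ i ∈ Finset.univ, min (d i / 2) l' ≤ d i / 2 :=
          fun i _ => min_le_left _ _
        have hsl : (∑ i, min (d i / 2) l') = ∑ i, d i / 2 := by
          rw [hlsum', hE', ← Finset.sum_div]
        have hleq := (Finset.sum_eq_sum_iff_of_le hpt').mp hsl
        intro i
        rw [hμf, hlf']
        linarith [hμeq i (Finset.mem_univ i), hleq i (Finset.mem_univ i)]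
      · intro i
        rw [hμf, hμf']
        have := cg_pointwise n d μ' μ (by rw [hμsum, hμsum']; linarith) i
        linarith
  · intro l μ _ _ _ _ _ _ i
    exact cross l μ i
end

section
/- For two claimants the contested garment distribution coincides with the classical concede-and-divide formula: let d₁, d₂ ≥ 0 and 0 ≤ E ≤ d₁ + d₂. If f = (f₁, f₂) is a CG allocation for (E, (d₁, d₂)) (via either branch of the definition), then f₁ = max (E − d₂) 0 + (E − max (E − d₁) 0 − max (E − d₂) 0) / 2 and f₂ = max (E − d₁) 0 + (E − max (E − d₁) 0 − max (E − d₂) 0) / 2. -/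
set_option maxHeartbeats 2000000

/-- For two claimants, any CG allocation coincides with the classical
concede-and-divide formula. -/
theorem cg_concede_and_divide (d₁ d₂ E f₁ f₂ : ℝ)
    (hd₁ : 0 ≤ d₁) (hd₂ : 0 ≤ d₂) (hE0 : 0 ≤ E) (hED : E ≤ d₁ + d₂)
    (hf : IsCG 2 ![d₁, d₂] E ![f₁, f₂]) :
    f₁ = max (E - d₂) 0 + (E - max (E - d₁) 0 - max (E - d₂) 0) / 2 ∧
    f₂ = max (E - d₁) 0 + (E - max (E - d₁) 0 - max (E - d₂) 0) / 2 := by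
  have key : ∀ a b : ℝ, 0 ≤ a → 0 ≤ b → ∀ l, 0 ≤ l →
      min (a / 2) l + min (b / 2) l = E → ∀ g₁ g₂, g₁ = min (a / 2) l →
      g₂ = min (b / 2) l →
      g₁ = max (E - b) 0 + (E - max (E - a) 0 - max (E - b) 0) / 2 ∧
      g₂ = max (E - a) 0 + (E - max (E - a) 0 - max (E - b) 0) / 2 := by
    intro a b ha hb l hl hsum g₁ g₂ h1 h2
    rcases min_cases (a / 2) l with ⟨e1, i1⟩ | ⟨e1, i1⟩ <;>
      rcases min_cases (b / 2) l with ⟨e2, i2⟩ | ⟨e2, i2⟩ <;>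
      rw [e1] at h1 hsum <;> rw [e2] at h2 hsum <;>
      rcases max_cases (E - a) 0 with ⟨m1, j1⟩ | ⟨m1, j1⟩ <;>
      rcases max_cases (E - b) 0 with ⟨m2, j2⟩ | ⟨m2, j2⟩ <;>
      rw [m1, m2] <;> exact ⟨by linarith, by linarith⟩
  rcases hf with ⟨hE, l, hl0, hsum, hfi⟩ | ⟨hE, l, hl0, hsum, hfi⟩
  · have h1 := hfi 0
    have h2 := hfi 1
    simp [Fin.sum_univ_two] at hsum h1 h2
    exact key d₁ d₂ hd₁ hd₂ l hl0 hsum f₁ f₂ h1 h2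
  · have h1 := hfi 0
    have h2 := hfi 1
    simp [Fin.sum_univ_two] at hsum h1 h2 hE
    rcases min_cases (d₁ / 2) l with ⟨e1, i1⟩ | ⟨e1, i1⟩ <;>
      rcases min_cases (d₂ / 2) l with ⟨e2, i2⟩ | ⟨e2, i2⟩ <;>
      rw [e1] at h1 hsum <;> rw [e2] at h2 hsum <;>
      rcases max_cases (E - d₁) 0 with ⟨m1, j1⟩ | ⟨m1, j1⟩ <;>
      rcases max_cases (E - d₂) 0 with ⟨m2, j2⟩ | ⟨m2, j2⟩ <;>
      rw [m1, m2] <;> exact ⟨by linarith, by linarith⟩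
end

section
/- The contested garment distribution is consistent: let d : Fin n → ℝ with 0 ≤ d i for all i, let D = ∑ i, d i, let 0 ≤ E ≤ D and let f be a CG allocation for (E, d). Then for every pair of distinct indices i, j, the pair (f i, f j) is a CG allocation of the estate f i + f j for the two-claimant demand vector (d i, d j). -/
/-- Consistency of the contested garment distribution: for any CG allocation
`f` of `(E, d)` and any pair of distinct agents `i, j`, the pair `(f i, f j)`
is a CG allocation of the estate `f i + f j` for the two-claimant demand
vector `(d i, d j)`. -/
theorem cg_consistent (n : ℕ) (d : Fin n → ℝ) (hd : ∀ i, 0 ≤ d i)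
    (E : ℝ) (hE0 : 0 ≤ E) (hED : E ≤ ∑ i, d i)
    (f : Fin n → ℝ) (hf : IsCG n d E f)
    (i j : Fin n) (hij : i ≠ j) :
    IsCG 2 ![d i, d j] (f i + f j) ![f i, f j] := by
  rcases hf with ⟨hE, l, hl, hsum, hfeq⟩ | ⟨hE, μ, hμ, hsum, hfeq⟩
  · left
    refine ⟨?_, l, hl, ?_, ?_⟩
    · have hi := min_le_left (d i / 2) l
      have hj := min_le_left (d j / 2) l
      simp only [Fin.sum_univ_two, Matrix.cons_val_zero, Matrix.cons_val_one, Matrix.head_cons]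
      rw [hfeq i, hfeq j]; linarith
    · simp [Fin.sum_univ_two, hfeq i, hfeq j]
    · intro k; fin_cases k <;> simp [hfeq i, hfeq j]
  · right
    refine ⟨?_, μ, hμ, ?_, ?_⟩
    · have hi := min_le_left (d i / 2) μ
      have hj := min_le_left (d j / 2) μ
      simp only [Fin.sum_univ_two, Matrix.cons_val_zero, Matrix.cons_val_one, Matrix.head_cons]
      rw [hfeq i, hfeq j]; linarith
    · simp only [Fin.sum_univ_two, Matrix.cons_val_zero, Matrix.cons_val_one, Matrix.head_cons]
      rw [hfeq i, hfeq j]; ring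
    · intro k; fin_cases k <;> simp [hfeq i, hfeq j]
end

section
/- (Aumann–Maschler uniqueness, the paper's Theorem 1.) Let R be a rule that assigns to every n, every demand vector d : Fin n → ℝ with 0 ≤ d i for all i, and every estate E with 0 ≤ E ≤ ∑ i, d i, an allocation R n E d : Fin n → ℝ such that (i) 0 ≤ R n E d i ≤ d i for all i and ∑ i, R n E d i = E (efficiency), (ii) R is consistent: for every problem and every pair of distinct indices i, j, the pair (R n E d i, R n E d j) equals R applied to the two-claimant problem with estate R n E d i + R n E d j and demands (d i, d j), and (iii) for every two-claimant problem with demands d₁, d₂ and estate E, R gives claimant 1 the amount max (E − d₂) 0 + (E − max (E − d₁) 0 − max (E − d₂) 0) / 2. Then R coincides with the contested garment distribution on every problem: for every n, d, E, R n E d is a CG allocation for (E, d). -/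
lemma cd_struct (d₁ d₂ e : ℝ) (h1 : 0 ≤ d₁) (h2 : 0 ≤ d₂) (he0 : 0 ≤ e)
    (he : e ≤ d₁ + d₂) :
    (∃ l : ℝ, 0 ≤ l ∧
        max (e - d₂) 0 + (e - max (e - d₁) 0 - max (e - d₂) 0) / 2 = min (d₁ / 2) l ∧
        e - (max (e - d₂) 0 + (e - max (e - d₁) 0 - max (e - d₂) 0) / 2) = min (d₂ / 2) l) ∨
    (∃ m : ℝ, 0 ≤ m ∧
        max (e - d₂) 0 + (e - max (e - d₁) 0 - max (e - d₂) 0) / 2 = d₁ - min (d₁ / 2) m ∧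
        e - (max (e - d₂) 0 + (e - max (e - d₁) 0 - max (e - d₂) 0) / 2) = d₂ - min (d₂ / 2) m) := by
  rcases le_total e d₁ with hA | hA <;> rcases le_total e d₂ with hB | hB
  · -- e ≤ d₁, e ≤ d₂
    left
    refine ⟨e / 2, by linarith, ?_, ?_⟩ <;>
      rw [max_eq_right (by linarith : e - d₂ ≤ 0), max_eq_right (by linarith : e - d₁ ≤ 0),
        min_eq_right (by linarith)] <;> ring
  · -- e ≤ d₁, d₂ ≤ e
    rcases le_total e ((d₁ + d₂) / 2) with hH | hH
    · left
      refine ⟨e - d₂ / 2, by linarith, ?_, ?_⟩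
      · rw [max_eq_left (by linarith : (0:ℝ) ≤ e - d₂), max_eq_right (by linarith : e - d₁ ≤ 0),
          min_eq_right (by linarith)]; ring
      · rw [max_eq_left (by linarith : (0:ℝ) ≤ e - d₂), max_eq_right (by linarith : e - d₁ ≤ 0),
          min_eq_left (by linarith)]; ring
    · right
      refine ⟨d₁ + d₂ / 2 - e, by linarith, ?_, ?_⟩
      · rw [max_eq_left (by linarith : (0:ℝ) ≤ e - d₂), max_eq_right (by linarith : e - d₁ ≤ 0),
          min_eq_right (by linarith)]; ring
      · rw [max_eq_left (by linarith : (0:ℝ) ≤ e - d₂), max_eq_right (by linarith : e - d₁ ≤ 0),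
          min_eq_left (by linarith)]; ring
  · -- d₁ ≤ e, e ≤ d₂
    rcases le_total e ((d₁ + d₂) / 2) with hH | hH
    · left
      refine ⟨e - d₁ / 2, by linarith, ?_, ?_⟩
      · rw [max_eq_right (by linarith : e - d₂ ≤ 0), max_eq_left (by linarith : (0:ℝ) ≤ e - d₁),
          min_eq_left (by linarith)]; ring
      · rw [max_eq_right (by linarith : e - d₂ ≤ 0), max_eq_left (by linarith : (0:ℝ) ≤ e - d₁),
          min_eq_right (by linarith)]; ring
    · right
      refine ⟨d₂ + d₁ / 2 - e, by linarith, ?_, ?_⟩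
      · rw [max_eq_right (by linarith : e - d₂ ≤ 0), max_eq_left (by linarith : (0:ℝ) ≤ e - d₁),
          min_eq_left (by linarith)]; ring
      · rw [max_eq_right (by linarith : e - d₂ ≤ 0), max_eq_left (by linarith : (0:ℝ) ≤ e - d₁),
          min_eq_right (by linarith)]; ring
  · -- d₁ ≤ e, d₂ ≤ e
    right
    refine ⟨(d₁ + d₂ - e) / 2, by linarith, ?_, ?_⟩ <;>
      rw [max_eq_left (by linarith : (0:ℝ) ≤ e - d₂), max_eq_left (by linarith : (0:ℝ) ≤ e - d₁),
        min_eq_right (by linarith)] <;> ring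

/-- Aumann–Maschler uniqueness: any rule that is efficient, consistent, and
coincides with concede-and-divide on every two-claimant problem is (on every
problem) a contested garment allocation. -/
theorem aumann_maschler_unique
    (R : (n : ℕ) → ℝ → (Fin n → ℝ) → (Fin n → ℝ))
    (heff : ∀ (n : ℕ) (E : ℝ) (d : Fin n → ℝ),
      (∀ i, 0 ≤ d i) → 0 ≤ E → E ≤ ∑ i, d i →
      (∀ i, 0 ≤ R n E d i ∧ R n E d i ≤ d i) ∧ (∑ i, R n E d i) = E)
    (hcons : ∀ (n : ℕ) (E : ℝ) (d : Fin n → ℝ),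
      (∀ i, 0 ≤ d i) → 0 ≤ E → E ≤ ∑ i, d i →
      ∀ i j : Fin n, i ≠ j →
        R 2 (R n E d i + R n E d j) ![d i, d j] = ![R n E d i, R n E d j])
    (h2 : ∀ d₁ d₂ E : ℝ, 0 ≤ d₁ → 0 ≤ d₂ → 0 ≤ E → E ≤ d₁ + d₂ →
      R 2 E ![d₁, d₂] 0 =
        max (E - d₂) 0 + (E - max (E - d₁) 0 - max (E - d₂) 0) / 2) :
    ∀ (n : ℕ) (E : ℝ) (d : Fin n → ℝ),
      (∀ i, 0 ≤ d i) → 0 ≤ E → E ≤ ∑ i, d i →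
      IsCG n d E (R n E d) := by
  intro n E d hd hE0 hED
  obtain ⟨hbnd, hsum⟩ := heff n E d hd hE0 hED
  set f := R n E d with hfdef
  -- pairwise structure
  have hpair : ∀ i j : Fin n, i ≠ j →
      ((∃ l : ℝ, 0 ≤ l ∧ f i = min (d i / 2) l ∧ f j = min (d j / 2) l) ∨
       (∃ m : ℝ, 0 ≤ m ∧ f i = d i - min (d i / 2) m ∧ f j = d j - min (d j / 2) m)) := by
    intro i j hij
    have hc := hcons n E d hd hE0 hED i j hij
    have he0 : 0 ≤ f i + f j := by
      have h1 := (hbnd i).1; have h2 := (hbnd j).1; linarith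
    have heub : f i + f j ≤ d i + d j := by
      have h1 := (hbnd i).2; have h2 := (hbnd j).2; linarith
    have hx := h2 (d i) (d j) (f i + f j) (hd i) (hd j) he0 heub
    have h0 : R 2 (f i + f j) ![d i, d j] 0 = f i := by rw [hc]; rfl
    have key : f i = max (f i + f j - d j) 0 +
        ((f i + f j) - max (f i + f j - d i) 0 - max (f i + f j - d j) 0) / 2 :=
      h0.symm.trans hx
    have hfj : f j = (f i + f j) - (max (f i + f j - d j) 0 +
        ((f i + f j) - max (f i + f j - d i) 0 - max (f i + f j - d j) 0) / 2) := by
      rw [← key]; ring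
    rcases cd_struct (d i) (d j) (f i + f j) (hd i) (hd j) he0 heub with
      ⟨l, hl, hxl, hyl⟩ | ⟨m, hm, hxm, hym⟩
    · exact Or.inl ⟨l, hl, key.trans hxl, hfj.trans hyl⟩
    · exact Or.inr ⟨m, hm, key.trans hxm, hfj.trans hym⟩
  rcases le_total E ((∑ i, d i) / 2) with hE | hE
  · -- gains case
    left
    refine ⟨hE, ?_⟩
    have hhalf : ∀ i, f i ≤ d i / 2 := by
      intro i
      by_contra hgt
      push_neg at hgt
      have hforall : ∀ j ∈ Finset.univ.erase i, d j / 2 ≤ f j := by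
        intro j hj
        have hij : i ≠ j := (Finset.ne_of_mem_erase hj).symm
        rcases hpair i j hij with ⟨l, _, hxi, _⟩ | ⟨m, _, _, hxj⟩
        · have := min_le_left (d i / 2) l; rw [← hxi] at this; linarith
        · have := min_le_left (d j / 2) m; rw [hxj]; linarith
      have hs1 : f i + ∑ j ∈ Finset.univ.erase i, f j = ∑ j, f j :=
        Finset.add_sum_erase _ f (Finset.mem_univ i)
      have hs2 : d i / 2 + ∑ j ∈ Finset.univ.erase i, d j / 2 = ∑ j, d j / 2 :=
        Finset.add_sum_erase _ (fun j => d j / 2) (Finset.mem_univ i)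
      have hs3 : (∑ j, d j / 2) = (∑ j, d j) / 2 := by rw [Finset.sum_div]
      have hle : ∑ j ∈ Finset.univ.erase i, d j / 2 ≤ ∑ j ∈ Finset.univ.erase i, f j :=
        Finset.sum_le_sum hforall
      rw [hsum] at hs1
      linarith
    cases isEmpty_or_nonempty (Fin n) with
    | inl hemp =>
      have hD : (∑ i, d i) = 0 := by simp [Finset.univ_eq_empty]
      have hE0' : E = 0 := le_antisymm (by rw [hD] at hED; exact hED) hE0
      exact ⟨0, le_refl 0, by simp [Finset.univ_eq_empty, hE0'], fun i => isEmptyElim i⟩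
    | inr hne =>
      obtain ⟨i₀, -, hmax⟩ := Finset.exists_max_image Finset.univ f Finset.univ_nonempty
      have hall : ∀ j, f j = min (d j / 2) (f i₀) := by
        intro j
        rcases eq_or_ne j i₀ with rfl | hne'
        · rw [min_eq_right (hhalf j)]
        · rcases eq_or_lt_of_le (hhalf j) with heq | hlt
          · rw [heq, min_eq_left (heq ▸ hmax j (Finset.mem_univ j))]
          · rcases hpair j i₀ hne' with ⟨l, _, hxj, hxi⟩ | ⟨m, _, hxj, _⟩
            · have hjl : f j = l := by
                rcases min_cases (d j / 2) l with ⟨h', _⟩ | ⟨h', _⟩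
                · rw [hxj, h'] at hlt; exact absurd hlt (lt_irrefl _)
                · rw [hxj, h']
              have hio : f i₀ ≤ l := by rw [hxi]; exact min_le_right _ _
              have hji : f j = f i₀ :=
                le_antisymm (hmax j (Finset.mem_univ j)) (by rw [hjl]; exact hio)
              rw [min_eq_right (by rw [← hji]; exact le_of_lt hlt), ← hji]
            · have := min_le_left (d j / 2) m
              rw [hxj] at hlt; linarith
      refine ⟨f i₀, (hbnd i₀).1, ?_, hall⟩
      rw [Finset.sum_congr rfl (fun j _ => (hall j).symm), hsum]
  · -- losses case
    right
    refine ⟨hE, ?_⟩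
    have hhalf : ∀ i, d i / 2 ≤ f i := by
      intro i
      by_contra hgt
      push_neg at hgt
      have hforall : ∀ j ∈ Finset.univ.erase i, f j ≤ d j / 2 := by
        intro j hj
        have hij : i ≠ j := (Finset.ne_of_mem_erase hj).symm
        rcases hpair i j hij with ⟨l, _, _, hxj⟩ | ⟨m, _, hxi, _⟩
        · rw [hxj]; exact min_le_left _ _
        · have := min_le_left (d i / 2) m; rw [hxi] at hgt; linarith
      have hs1 : f i + ∑ j ∈ Finset.univ.erase i, f j = ∑ j, f j :=
        Finset.add_sum_erase _ f (Finset.mem_univ i)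
      have hs2 : d i / 2 + ∑ j ∈ Finset.univ.erase i, d j / 2 = ∑ j, d j / 2 :=
        Finset.add_sum_erase _ (fun j => d j / 2) (Finset.mem_univ i)
      have hs3 : (∑ j, d j / 2) = (∑ j, d j) / 2 := by rw [Finset.sum_div]
      have hle : ∑ j ∈ Finset.univ.erase i, f j ≤ ∑ j ∈ Finset.univ.erase i, d j / 2 :=
        Finset.sum_le_sum hforall
      rw [hsum] at hs1
      linarith
    cases isEmpty_or_nonempty (Fin n) with
    | inl hemp =>
      have hD : (∑ i, d i) = 0 := by simp [Finset.univ_eq_empty]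
      have hE0' : E = 0 := le_antisymm (by rw [hD] at hED; exact hED) hE0
      refine ⟨0, le_refl 0, by simp [Finset.univ_eq_empty, hE0'], fun i => isEmptyElim i⟩
    | inr hne =>
      obtain ⟨i₀, -, hmax⟩ := Finset.exists_max_image Finset.univ (fun j => d j - f j)
        Finset.univ_nonempty
      set μ := d i₀ - f i₀ with hμdef
      have hμhalf : μ ≤ d i₀ / 2 := by have := hhalf i₀; simp only [hμdef]; linarith
      have hall : ∀ j, f j = d j - min (d j / 2) μ := by
        intro j
        rcases eq_or_ne j i₀ with rfl | hne'
        · rw [min_eq_right hμhalf]; ring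
        · have hgj : d j - f j ≤ d j / 2 := by have := hhalf j; linarith
          rcases eq_or_lt_of_le hgj with heq | hlt
          · have hμge : d j / 2 ≤ μ := heq ▸ hmax j (Finset.mem_univ j)
            rw [min_eq_left hμge]; linarith
          · rcases hpair j i₀ hne' with ⟨l, _, hxj, _⟩ | ⟨m, _, hxj, hxi⟩
            · have := min_le_left (d j / 2) l
              rw [hxj] at hlt; linarith
            · have hjm : d j - f j = m := by
                rcases min_cases (d j / 2) m with ⟨h', _⟩ | ⟨h', _⟩
                · rw [hxj, h'] at hlt; linarith
                · rw [hxj, h']; ring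
              have hio : μ ≤ m := by
                have : d i₀ - f i₀ ≤ m := by
                  rw [hxi]; have := min_le_right (d i₀ / 2) m; linarith
                simpa [hμdef] using this
              have hji : d j - f j = μ :=
                le_antisymm (hmax j (Finset.mem_univ j)) (by rw [hjm]; exact hio)
              rw [min_eq_right (by rw [← hji]; exact le_of_lt hlt), ← hji]; ring
      refine ⟨μ, ?_, ?_, hall⟩
      · have := (hbnd i₀).2; simp only [hμdef]; linarith
      · have : ∀ j ∈ Finset.univ, min (d j / 2) μ = d j - f j := by
          intro j _; have := hall j; linarith
        rw [Finset.sum_congr rfl this, Finset.sum_sub_distrib, hsum]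
end
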